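/- If M is a malcharacteristic subgroup of a group H and A is a malnormal subgroup of M, then A is a malcharacteristic subgroup of H. -/

import Mathlib

/-- A subgroup `M ≤ H` is malnormal if `g⁻¹Mg ∩ M ≠ 1` implies `g ∈ M`. -/
def Malnormal {H : Type*} [Group H] (M : Subgroup H) : Prop :=
  ∀ g : H, (∃ x ∈ M, x ≠ 1 ∧ g⁻¹ * x * g ∈ M) → g ∈ M

/-- A subgroup `M ≤ H` is malcharacteristic if for every automorphism `δ` of `H`,
`δ(M) ∩ M ≠ 1` implies that `δ` is conjugation by an element of `M`. -/
def Malcharacteristic {H : Type*} [Group H] (M : Subgroup H) : Prop :=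
  ∀ δ : MulAut H, (∃ x ∈ M, x ≠ 1 ∧ δ x ∈ M) →
    ∃ m ∈ M, ∀ h : H, δ h = m⁻¹ * h * m

theorem Malnormal.mem_of_conj_mem_subgroupOf {H : Type*} [Group H] {M A : Subgroup H}
    (hA : Malnormal (A.subgroupOf M)) (hAM : A ≤ M) {m x : H} (hm : m ∈ M) (hx : x ∈ A)
    (hx1 : x ≠ 1) (hconj : m⁻¹ * x * m ∈ A) : m ∈ A :=
  hA ⟨m, hm⟩ ⟨⟨x, hAM hx⟩, hx, fun h => hx1 (congrArg Subtype.val h), hconj⟩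

theorem lem_malnorm_leq_malchar {H : Type*} [Group H] (M A : Subgroup H)
    (hM : Malcharacteristic M) (hAM : A ≤ M)
    (hA : Malnormal (A.subgroupOf M)) :
    Malcharacteristic A := by
  rintro δ ⟨x, hxA, hx1, hδxA⟩
  obtain ⟨m, hmM, hδ⟩ := hM δ ⟨x, hAM hxA, hx1, hAM hδxA⟩
  refine ⟨m, hA.mem_of_conj_mem_subgroupOf hAM hmM hxA hx1 ?_, hδ⟩
  rwa [← hδ x]
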